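/- Let d ≥ 1, M ≥ 1, σ > 0, λ > 0, and let π be a finite Borel measure on ℝ^d with ∫‖x‖ dπ(x) < ∞. For each i ∈ {1,…,M} and j ∈ {1,…,d}, denote by ∂_{ij} the partial derivative with respect to the j-th coordinate of y_i. Then for every configuration Y = (y_1,…,y_M) ∈ (ℝ^d)^M, the function F_{M,λ}(Y) = inf_{w ∈ ℝ^M} (1/2)(C_π − 2⟨w, v0(Y)⟩ + wᵀ K_λ(Y) w) satisfies the envelope identity ∂_{ij} F_{M,λ}(Y) = −⟨ w*_λ(Y), ∂_{ij} v0(Y) ⟩ + (1/2) ⟨ w*_λ(Y), (∂_{ij} K(Y)) w*_λ(Y) ⟩, where ∂_{ij} v0(Y) ∈ ℝ^M and ∂_{ij} K(Y) ∈ ℝ^{M×M} are the entrywise partial derivatives. -/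

import Mathlib

/-!
Along the path, write `q_t(w) = ½ (C_π - 2 ⟨w, v0(Y_t)⟩ + wᵀ K_λ(Y_t) w)`, so that
`F_{M,λ}(Y_t) = inf_w q_t(w)`, and put `w₀ = w*_λ(Y)`. The Gaussian kernel matrix is positive
semidefinite: after factoring out `exp (-‖x‖² / 2σ²) exp (-‖y‖² / 2σ²)`, the Taylor series of
`exp (⟪x, y⟫ / σ²)` is a nonnegative combination of Hadamard powers of a Gram matrix, which are
positive semidefinite by the Schur product theorem. Hence `K_λ(Y_t) ⪰ λ I`, and completing the
square gives `q_t(w₀) - ‖r_t‖² / 2λ ≤ F_{M,λ}(Y_t) ≤ q_t(w₀)` with the residual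
`r_t = K_λ(Y_t) w₀ - v0(Y_t)`. Since `r_0 = 0` and `r` is differentiable, `‖r_t‖² = o(t)`, so
`F_{M,λ}(Y_t)` has the same derivative at `0` as `q_t(w₀)`, which is the claimed expression.
-/

open MeasureTheory Matrix

noncomputable section

abbrev Euc (d : ℕ) := EuclideanSpace ℝ (Fin d)

/-- The squared-exponential (Gaussian) kernel with bandwidth `σ`. -/
def ker {d : ℕ} (σ : ℝ) (x y : Euc d) : ℝ := Real.exp (-‖x - y‖ ^ 2 / (2 * σ ^ 2))

/-- Kernel mean embedding `v0(y) = ∫ κ(x,y) dπ(x)`. -/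
def v0 {d : ℕ} (σ : ℝ) (π : Measure (Euc d)) (y : Euc d) : ℝ := ∫ x, ker σ x y ∂π

/-- The constant `C_π = ∬ κ(x,x') dπ(x) dπ(x')`. -/
def Cpi {d : ℕ} (σ : ℝ) (π : Measure (Euc d)) : ℝ := ∫ x, ∫ x', ker σ x x' ∂π ∂π

/-- Regularized kernel matrix `K_λ(Y) = K(Y) + λ I`. -/
def Klam {d M : ℕ} (σ lam : ℝ) (Y : Fin M → Euc d) : Matrix (Fin M) (Fin M) ℝ :=
  Matrix.of (fun i j => ker σ (Y i) (Y j)) + lam • (1 : Matrix (Fin M) (Fin M) ℝ)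

/-- The vector `v0(Y) ∈ ℝ^M` with entries `v0(y_i)`. -/
def v0vec {d M : ℕ} (σ : ℝ) (π : Measure (Euc d)) (Y : Fin M → Euc d) : Fin M → ℝ :=
  fun i => v0 σ π (Y i)

/-- Regularized optimal weights `w*_λ(Y) = K_λ(Y)⁻¹ v0(Y)`. -/
def wstar {d M : ℕ} (σ lam : ℝ) (π : Measure (Euc d)) (Y : Fin M → Euc d) : Fin M → ℝ :=
  (Klam σ lam Y)⁻¹ *ᵥ v0vec σ π Y

/-- `F_{M,λ}(Y) = inf_w (1/2)(C_π − 2⟨w, v0(Y)⟩ + wᵀ K_λ(Y) w)`. -/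
def FM {d M : ℕ} (σ lam : ℝ) (π : Measure (Euc d)) (Y : Fin M → Euc d) : ℝ :=
  ⨅ w : Fin M → ℝ,
    (1 / 2) * (Cpi σ π - 2 * (w ⬝ᵥ v0vec σ π Y) + w ⬝ᵥ (Klam σ lam Y *ᵥ w))

/-- The path `t ↦ Y` with the `j`-th coordinate of `y_i` perturbed by `t`. -/
def Ypath {d M : ℕ} (Y : Fin M → Euc d) (i : Fin M) (j : Fin d) (t : ℝ) : Fin M → Euc d :=
  Function.update Y i (Y i + t • EuclideanSpace.single j (1 : ℝ))

open scoped InnerProductSpace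

theorem posSemidef_inner_pow {ι E : Type*} [Finite ι] [NormedAddCommGroup E]
    [InnerProductSpace ℝ E] (z : ι → E) (n : ℕ) :
    (Matrix.of fun k l => ⟪z k, z l⟫_ℝ ^ n).PosSemidef := by
  induction n with
  | zero =>
    have h : (Matrix.of fun k l => ⟪z k, z l⟫_ℝ ^ 0) = gram ℝ (fun _ : ι => (1 : ℝ)) := by
      ext; simp [gram_apply]
    exact h ▸ posSemidef_gram ℝ _
  | succ n ih =>
    have h : (Matrix.of fun k l => ⟪z k, z l⟫_ℝ ^ (n + 1)) =
        (Matrix.of fun k l => ⟪z k, z l⟫_ℝ ^ n) ⊙ gram ℝ z := by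
      ext; simp [gram_apply, pow_succ]
    exact h ▸ ih.hadamard (posSemidef_gram ℝ z)

theorem posSemidef_exp_inner {ι E : Type*} [Fintype ι] [NormedAddCommGroup E]
    [InnerProductSpace ℝ E] (z : ι → E) {s : ℝ} (hs : 0 ≤ s) :
    (Matrix.of fun k l => Real.exp (s * ⟪z k, z l⟫_ℝ)).PosSemidef := by
  refine .of_dotProduct_mulVec_nonneg ?_ fun u => ?_
  · ext k l
    simp [real_inner_comm]
  have hterm : ∀ k l, HasSum (fun n : ℕ => u k * ((s * ⟪z k, z l⟫_ℝ) ^ n / n.factorial * u l))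
      (u k * (Real.exp (s * ⟪z k, z l⟫_ℝ) * u l)) := fun k l => by
    rw [Real.exp_eq_exp_ℝ]
    exact ((NormedSpace.expSeries_div_hasSum_exp _).mul_right (u l)).mul_left (u k)
  have hquad : star u ⬝ᵥ ((Matrix.of fun k l => Real.exp (s * ⟪z k, z l⟫_ℝ)) *ᵥ u) =
      ∑ k, ∑ l, u k * (Real.exp (s * ⟪z k, z l⟫_ℝ) * u l) := by
    simp only [dotProduct, mulVec, Matrix.of_apply, star_trivial, Finset.mul_sum]
  rw [hquad]
  refine (hasSum_sum (s := .univ) fun k _ => hasSum_sum (s := .univ) fun l _ => hterm k l).nonneg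
    fun n => ?_
  have hn : ∑ k, ∑ l, u k * ((s * ⟪z k, z l⟫_ℝ) ^ n / n.factorial * u l) =
      s ^ n / n.factorial * (star u ⬝ᵥ ((Matrix.of fun k l => ⟪z k, z l⟫_ℝ ^ n) *ᵥ u)) := by
    simp only [dotProduct, mulVec, Matrix.of_apply, star_trivial, Finset.mul_sum]
    refine Finset.sum_congr rfl fun k _ => Finset.sum_congr rfl fun l _ => ?_
    ring
  rw [hn]
  exact mul_nonneg (by positivity) ((posSemidef_inner_pow z n).dotProduct_mulVec_nonneg u)

theorem ker_eq_mul_exp_inner {d : ℕ} (σ : ℝ) (x y : Euc d) :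
    ker σ x y = Real.exp (-‖x‖ ^ 2 / (2 * σ ^ 2)) *
      Real.exp ((σ ^ 2)⁻¹ * ⟪x, y⟫_ℝ) * Real.exp (-‖y‖ ^ 2 / (2 * σ ^ 2)) := by
  rw [ker, ← Real.exp_add, ← Real.exp_add, norm_sub_sq_real]
  ring_nf

theorem posSemidef_ker {ι : Type*} [Fintype ι] {d : ℕ} (σ : ℝ) (z : ι → Euc d) :
    (Matrix.of fun k l => ker σ (z k) (z l)).PosSemidef := by
  classical
  set D := diagonal fun k => Real.exp (-‖z k‖ ^ 2 / (2 * σ ^ 2))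
  have h : (Matrix.of fun k l => ker σ (z k) (z l)) =
      D * (Matrix.of fun k l => Real.exp ((σ ^ 2)⁻¹ * ⟪z k, z l⟫_ℝ)) * Dᴴ := by
    ext k l
    simp [D, ker_eq_mul_exp_inner]
  exact h ▸ (posSemidef_exp_inner z (by positivity)).mul_mul_conjTranspose_same D

def quadObjective {n : Type*} [Fintype n] (c : ℝ) (v : n → ℝ) (A : Matrix n n ℝ) (w : n → ℝ) :
    ℝ :=
  (1 / 2) * (c - 2 * (w ⬝ᵥ v) + w ⬝ᵥ (A *ᵥ w))

section QuadraticObjective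

variable {n : Type*} [DecidableEq n] {lam c : ℝ} {v : n → ℝ} {A : Matrix n n ℝ}

theorem transpose_eq_of_posSemidef_sub_smul_one (hA : (A - lam • 1).PosSemidef) : Aᵀ = A := by
  have h : (A - lam • 1)ᵀ = A - lam • 1 := by
    simpa only [conjTranspose_eq_transpose_of_trivial] using hA.isHermitian.eq
  rwa [transpose_sub, transpose_smul, transpose_one, sub_left_inj] at h

variable [Fintype n]

theorem smul_dotProduct_self_le_of_posSemidef_sub_smul_one (hA : (A - lam • 1).PosSemidef)
    (u : n → ℝ) : lam * (u ⬝ᵥ u) ≤ u ⬝ᵥ (A *ᵥ u) := by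
  have h := hA.dotProduct_mulVec_nonneg u
  simp only [star_trivial, sub_mulVec, smul_mulVec, one_mulVec, dotProduct_sub,
    dotProduct_smul, smul_eq_mul] at h
  linarith

theorem quadObjective_sub_le (hlam : 0 < lam) (hA : (A - lam • 1).PosSemidef) (w₀ w : n → ℝ) :
    quadObjective c v A w₀ - (A *ᵥ w₀ - v) ⬝ᵥ (A *ᵥ w₀ - v) / (2 * lam) ≤
      quadObjective c v A w := by
  set r := A *ᵥ w₀ - v
  set δ := w₀ - w
  have hw : w = w₀ - δ := by simp [δ]
  have hsymm : w₀ ⬝ᵥ (A *ᵥ δ) = δ ⬝ᵥ (A *ᵥ w₀) := by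
    rw [dotProduct_mulVec, ← mulVec_transpose, transpose_eq_of_posSemidef_sub_smul_one hA,
      dotProduct_comm]
  have hdiff : quadObjective c v A w₀ - quadObjective c v A w =
      δ ⬝ᵥ r - (1 / 2) * (δ ⬝ᵥ (A *ᵥ δ)) := by
    simp only [quadObjective, hw, r, mulVec_sub, dotProduct_sub, sub_dotProduct]
    linear_combination (1 / 2 : ℝ) * hsymm
  have hcoer := smul_dotProduct_self_le_of_posSemidef_sub_smul_one hA δ
  -- AM-GM: `2 λ ⟪δ, r⟫ ≤ λ² ⟪δ, δ⟫ + ⟪r, r⟫`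
  have hsq : 0 ≤ (lam • δ - r) ⬝ᵥ (lam • δ - r) := by
    simpa using dotProduct_star_self_nonneg (lam • δ - r)
  simp only [dotProduct_sub, sub_dotProduct, dotProduct_smul, smul_dotProduct, smul_eq_mul,
    dotProduct_comm r δ] at hsq
  have hbound : δ ⬝ᵥ r - (1 / 2) * (δ ⬝ᵥ (A *ᵥ δ)) ≤ r ⬝ᵥ r / (2 * lam) := by
    rw [le_div_iff₀ (by positivity)]
    nlinarith
  linarith

theorem quadObjective_sub_le_iInf (hlam : 0 < lam) (hA : (A - lam • 1).PosSemidef)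
    (w₀ : n → ℝ) :
    quadObjective c v A w₀ - (A *ᵥ w₀ - v) ⬝ᵥ (A *ᵥ w₀ - v) / (2 * lam) ≤
      ⨅ w, quadObjective c v A w :=
  le_ciInf (quadObjective_sub_le hlam hA w₀)

theorem iInf_quadObjective_le (hlam : 0 < lam) (hA : (A - lam • 1).PosSemidef) (w₀ : n → ℝ) :
    ⨅ w, quadObjective c v A w ≤ quadObjective c v A w₀ :=
  ciInf_le ⟨_, Set.forall_mem_range.2 (quadObjective_sub_le hlam hA w₀)⟩ w₀

end QuadraticObjective

section PathDerivatives

variable {n : Type*} [Fintype n] {x : ℝ}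

theorem hasDerivAt_dotProduct {u v : ℝ → n → ℝ} {u' v' : n → ℝ}
    (hu : ∀ k, HasDerivAt (fun t => u t k) (u' k) x)
    (hv : ∀ k, HasDerivAt (fun t => v t k) (v' k) x) :
    HasDerivAt (fun t => u t ⬝ᵥ v t) (u' ⬝ᵥ v x + u x ⬝ᵥ v') x := by
  simp only [dotProduct, ← Finset.sum_add_distrib]
  exact HasDerivAt.fun_sum fun k _ => (hu k).mul (hv k)

theorem hasDerivAt_mulVec {A : ℝ → Matrix n n ℝ} {A' : Matrix n n ℝ}
    (hA : ∀ k l, HasDerivAt (fun t => A t k l) (A' k l) x) (w : n → ℝ) (k : n) :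
    HasDerivAt (fun t => (A t *ᵥ w) k) ((A' *ᵥ w) k) x := by
  simpa [mulVec] using hasDerivAt_dotProduct (hA k) fun _ => hasDerivAt_const x (w _)

end PathDerivatives

theorem hasDerivAt_zero_of_nonneg_of_le {e h : ℝ → ℝ} {x : ℝ} (he : ∀ t, 0 ≤ e t)
    (heh : ∀ t, e t ≤ h t) (hh : HasDerivAt h 0 x) (hx : h x = 0) : HasDerivAt e 0 x := by
  have hex : e x = 0 := le_antisymm (hx ▸ heh x) (he x)
  rw [hasDerivAt_iff_isLittleO] at hh ⊢
  simp only [hx, hex, smul_zero, sub_zero] at hh ⊢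
  refine Asymptotics.IsBigO.trans_isLittleO ?_ hh
  refine Asymptotics.IsBigO.of_bound 1 (Filter.Eventually.of_forall fun t => ?_)
  rw [one_mul, Real.norm_of_nonneg (he t), Real.norm_of_nonneg ((he t).trans (heh t))]
  exact heh t

theorem hasDerivAt_iInf_quadObjective {n : Type*} [Fintype n] [DecidableEq n]
    {A : ℝ → Matrix n n ℝ} {A' : Matrix n n ℝ} {v : ℝ → n → ℝ} {v' w₀ : n → ℝ}
    {c lam x : ℝ} (hlam : 0 < lam) (hpos : ∀ t, (A t - lam • 1).PosSemidef)
    (hA : ∀ k l, HasDerivAt (fun t => A t k l) (A' k l) x)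
    (hv : ∀ k, HasDerivAt (fun t => v t k) (v' k) x) (hw₀ : A x *ᵥ w₀ = v x) :
    HasDerivAt (fun t => ⨅ w, quadObjective c (v t) (A t) w)
      (-(w₀ ⬝ᵥ v') + 1 / 2 * (w₀ ⬝ᵥ (A' *ᵥ w₀))) x := by
  have hw₀' : ∀ k, HasDerivAt (fun _ : ℝ => w₀ k) ((0 : n → ℝ) k) x :=
    fun k => hasDerivAt_const x (w₀ k)
  have hg : HasDerivAt (fun t => quadObjective c (v t) (A t) w₀)
      (-(w₀ ⬝ᵥ v') + 1 / 2 * (w₀ ⬝ᵥ (A' *ᵥ w₀))) x := by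
    have hdot := hasDerivAt_dotProduct hw₀' hv
    have hquad := hasDerivAt_dotProduct hw₀' (hasDerivAt_mulVec hA w₀)
    refine ((((hasDerivAt_const x c).sub (hdot.const_mul 2)).add hquad).const_mul
      (1 / 2)).congr_deriv ?_
    simp only [zero_dotProduct, zero_add]
    ring
  -- The minimum lies within `‖r t‖² / 2λ` of the value at `w₀`, and `‖r t‖²` vanishes to
  -- second order at `x`.
  set r := fun t => A t *ᵥ w₀ - v t
  have hr : ∀ k, HasDerivAt (fun t => r t k) ((A' *ᵥ w₀) k - v' k) x :=
    fun k => (hasDerivAt_mulVec hA w₀ k).sub (hv k)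
  have hrx : r x = 0 := by simp [r, hw₀]
  have hgap : HasDerivAt
      (fun t => quadObjective c (v t) (A t) w₀ - ⨅ w, quadObjective c (v t) (A t) w) 0 x := by
    refine hasDerivAt_zero_of_nonneg_of_le (h := fun t => r t ⬝ᵥ r t / (2 * lam))
      (fun t => sub_nonneg.2 (iInf_quadObjective_le hlam (hpos t) w₀))
      (fun t => by linarith [quadObjective_sub_le_iInf (c := c) (v := v t) hlam (hpos t) w₀])
      ?_ (by simp [hrx])
    simpa [hrx] using (hasDerivAt_dotProduct hr hr).div_const (2 * lam)
  refine ((hg.sub hgap).congr_deriv (sub_zero _)).congr_of_eventuallyEq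
    (Filter.Eventually.of_forall fun t => ?_)
  simp

section GaussianKernel

variable {d : ℕ} {σ : ℝ}

theorem ker_pos (x y : Euc d) : 0 < ker σ x y := Real.exp_pos _

theorem ker_le_one (x y : Euc d) : ker σ x y ≤ 1 := by
  rw [ker, Real.exp_le_one_iff]
  exact div_nonpos_of_nonpos_of_nonneg (neg_nonpos.2 (sq_nonneg _)) (by positivity)

theorem continuous_ker_left (y : Euc d) : Continuous fun x => ker σ x y := by
  unfold ker
  fun_prop

theorem hasDerivAt_ker_line (x y e : Euc d) (t : ℝ) :
    HasDerivAt (fun s : ℝ => ker σ x (y + s • e))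
      (ker σ x (y + t • e) * (⟪x - (y + t • e), e⟫_ℝ / σ ^ 2)) t := by
  have hp : HasDerivAt (fun s : ℝ => x - (y + s • e)) (-e) t := by
    simpa using (((hasDerivAt_id t).smul_const e).const_add y).const_sub x
  refine (hp.norm_sq.neg.div_const (2 * σ ^ 2)).exp.congr_deriv ?_
  rw [Pi.neg_apply, inner_neg_right, ker]
  ring

theorem differentiable_ker_line (y y' e e' : Euc d) :
    Differentiable ℝ fun t : ℝ => ker σ (y + t • e) (y' + t • e') :=
  (((by fun_prop : Differentiable ℝ fun t : ℝ => y + t • e - (y' + t • e')).norm_sq ℝ).neg.div_const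
    _).exp

variable (π : Measure (Euc d)) [IsFiniteMeasure π]

theorem differentiableAt_v0_line (hπ : Integrable (fun x => ‖x‖) π) (y e : Euc d) :
    DifferentiableAt ℝ (fun t : ℝ => v0 σ π (y + t • e)) 0 := by
  set F' : ℝ → Euc d → ℝ := fun t x => ker σ x (y + t • e) * (⟪x - (y + t • e), e⟫_ℝ / σ ^ 2)
  have hF'_cont : Continuous (F' 0) := by
    simp only [F', zero_smul, add_zero]
    exact (continuous_ker_left y).mul (by fun_prop)
  have hbound : ∀ x, ∀ t ∈ Metric.ball (0 : ℝ) 1,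
      ‖F' t x‖ ≤ (‖x‖ + ‖y‖ + ‖e‖) * ‖e‖ / σ ^ 2 := by
    intro x t ht
    rw [mem_ball_zero_iff, Real.norm_eq_abs] at ht
    have hline : ‖x - (y + t • e)‖ ≤ ‖x‖ + ‖y‖ + ‖e‖ := by
      calc ‖x - (y + t • e)‖ ≤ ‖x‖ + (‖y‖ + |t| * ‖e‖) := by
            grw [norm_sub_le, norm_add_le, norm_smul, Real.norm_eq_abs]
        _ ≤ ‖x‖ + ‖y‖ + ‖e‖ := by nlinarith [norm_nonneg e]
    have hker := ker_le_one (σ := σ) x (y + t • e)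
    have hker₀ := (ker_pos (σ := σ) x (y + t • e)).le
    simp only [F', norm_mul, norm_div, Real.norm_of_nonneg hker₀, norm_pow, Real.norm_eq_abs,
      sq_abs]
    calc ker σ x (y + t • e) * (|⟪x - (y + t • e), e⟫_ℝ| / σ ^ 2)
        ≤ 1 * (‖x - (y + t • e)‖ * ‖e‖ / σ ^ 2) := by
          gcongr
          exact abs_real_inner_le_norm _ _
      _ ≤ (‖x‖ + ‖y‖ + ‖e‖) * ‖e‖ / σ ^ 2 := by
          rw [one_mul]
          gcongr
  have h := hasDerivAt_integral_of_dominated_loc_of_deriv_le (μ := π) (F' := F')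
    (bound := fun x => (‖x‖ + ‖y‖ + ‖e‖) * ‖e‖ / σ ^ 2) (Metric.ball_mem_nhds 0 one_pos)
    (Filter.Eventually.of_forall fun t => (continuous_ker_left _).aestronglyMeasurable)
    (Integrable.of_bound (continuous_ker_left _).aestronglyMeasurable 1
      (ae_of_all _ fun x => by
        rw [Real.norm_of_nonneg (ker_pos _ _).le]
        exact ker_le_one _ _))
    hF'_cont.aestronglyMeasurable (ae_of_all _ hbound)
    ((((hπ.add (integrable_const _)).add (integrable_const _)).mul_const _).div_const _)
    (ae_of_all _ fun x t _ => hasDerivAt_ker_line x y e t)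
  exact h.2.differentiableAt

end GaussianKernel

theorem Ypath_eq_add_smul {d M : ℕ} (Y : Fin M → Euc d) (i : Fin M) (j : Fin d) (t : ℝ) :
    Ypath Y i j t = Y + t • (Pi.single i (EuclideanSpace.single j (1 : ℝ)) : Fin M → Euc d) := by
  funext k
  by_cases h : k = i
  · subst h
    simp [Ypath]
  · simp [Ypath, h]

theorem Klam_mulVec_wstar {d M : ℕ} (σ : ℝ) {lam : ℝ} (hlam : 0 < lam) (π : Measure (Euc d))
    (Y : Fin M → Euc d) : Klam σ lam Y *ᵥ wstar σ lam π Y = v0vec σ π Y := by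
  have hK : (Klam σ lam Y).PosDef :=
    PosDef.posSemidef_add (posSemidef_ker σ Y) (PosDef.one.smul hlam)
  rw [wstar, mulVec_mulVec, mul_nonsing_inv _ ((isUnit_iff_isUnit_det _).mp hK.isUnit),
    one_mulVec]

theorem envelope_identity_general
    (d M : ℕ) (σ lam : ℝ) (hlam : 0 < lam)
    (π : Measure (Euc d)) [IsFiniteMeasure π] (hπ : Integrable (fun x => ‖x‖) π)
    (Y : Fin M → Euc d) (i : Fin M) (j : Fin d) :
    HasDerivAt (fun t : ℝ => FM σ lam π (Ypath Y i j t))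
      (-(wstar σ lam π Y ⬝ᵥ fun k => deriv (fun t : ℝ => v0 σ π (Ypath Y i j t k)) 0) +
        (1 / 2) *
          (wstar σ lam π Y ⬝ᵥ
            ((Matrix.of fun k l =>
                deriv (fun t : ℝ => ker σ (Ypath Y i j t k) (Ypath Y i j t l)) 0) *ᵥ
              wstar σ lam π Y)))
      0 := by
  set E : Fin M → Euc d := Pi.single i (EuclideanSpace.single j (1 : ℝ))
  simp only [Ypath_eq_add_smul]
  refine hasDerivAt_iInf_quadObjective (c := Cpi σ π) (A := fun t => Klam σ lam (Y + t • E))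
    (v := fun t => v0vec σ π (Y + t • E)) hlam (fun t => ?_) (fun k l => ?_) (fun k => ?_) ?_
  · rw [Klam, add_sub_cancel_right]
    exact posSemidef_ker σ _
  · simp only [Klam, Matrix.add_apply, of_apply]
    exact (differentiable_ker_line (Y k) (Y l) (E k) (E l) 0).hasDerivAt.add_const _
  · exact (differentiableAt_v0_line π hπ (Y k) (E k)).hasDerivAt
  · rw [zero_smul, add_zero]
    exact Klam_mulVec_wstar σ hlam π Y

/-- envelope identity: the partial derivative of `F_{M,λ}` with respect to
the `j`-th coordinate of `y_i` exists and equals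
`−⟨w*_λ(Y), ∂_{ij} v0(Y)⟩ + (1/2)⟨w*_λ(Y), (∂_{ij} K(Y)) w*_λ(Y)⟩`. -/
theorem envelope_identity
    (d M : ℕ) (hd : 1 ≤ d) (hM : 1 ≤ M) (σ lam : ℝ) (hσ : 0 < σ) (hlam : 0 < lam)
    (π : Measure (Euc d)) [IsFiniteMeasure π] (hπ : Integrable (fun x => ‖x‖) π)
    (Y : Fin M → Euc d) (i : Fin M) (j : Fin d) :
    HasDerivAt (fun t : ℝ => FM σ lam π (Ypath Y i j t))
      (-(wstar σ lam π Y ⬝ᵥ fun k => deriv (fun t : ℝ => v0 σ π (Ypath Y i j t k)) 0) +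
        (1 / 2) *
          (wstar σ lam π Y ⬝ᵥ
            ((Matrix.of fun k l =>
                deriv (fun t : ℝ => ker σ (Ypath Y i j t k) (Ypath Y i j t l)) 0) *ᵥ
              wstar σ lam π Y)))
      0 :=
  envelope_identity_general d M σ lam hlam π hπ Y i j
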